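/- For every odd prime p, the integer sum over k from 0 to p-1 of (-1)^k * 2^(3(p-1-k)) * (sum over j from 0 to k of binom(2j,j)*binom(2k-2j,k-j)*(6j+1)*(6k-6j+1)) is divisible by p. -/

import Mathlib

/-!
Write `c n` for the central binomial coefficient; everything follows from the recursion
`(n + 1) c (n + 1) = 2 (2n + 1) c n`. By symmetry of the antidiagonal it gives
`∑_{i+j=n} c i c j = 4 ^ n` and `8 ∑_{i+j=n} i j c i c j = n (n - 1) 4 ^ n`, hence the inner sum
equals `4 ^ k (9k² + 3k + 2) / 2`. Summing against `(-1) ^ k 8 ^ (n - k)` then gives exactly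
`(-1) ^ n 4 ^ n (n + 1) (3n + 2) / 2`, which is divisible by `p = n + 1` once `p` is odd.
-/

open Finset Nat

namespace Nat

theorem two_mul_sum_antidiagonal_fst_mul_centralBinom_mul (n : ℕ) :
    2 * ∑ ij ∈ antidiagonal n, ij.1 * (centralBinom ij.1 * centralBinom ij.2) =
      n * ∑ ij ∈ antidiagonal n, centralBinom ij.1 * centralBinom ij.2 := by
  have hswap : ∑ ij ∈ antidiagonal n, ij.1 * (centralBinom ij.1 * centralBinom ij.2) =
      ∑ ij ∈ antidiagonal n, ij.2 * (centralBinom ij.1 * centralBinom ij.2) := by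
    rw [← Finset.Nat.sum_antidiagonal_swap]
    exact sum_congr rfl fun ij _ => by rw [Prod.fst_swap, Prod.snd_swap]; ring
  rw [two_mul]
  nth_rw 2 [hswap]
  rw [← sum_add_distrib, mul_sum]
  refine sum_congr rfl fun ij hij => ?_
  rw [← add_mul, mem_antidiagonal.mp hij]

theorem sum_antidiagonal_centralBinom_mul_centralBinom (n : ℕ) :
    ∑ ij ∈ antidiagonal n, centralBinom ij.1 * centralBinom ij.2 = 4 ^ n := by
  induction n with
  | zero => simp
  | succ n ih =>
    refine Nat.eq_of_mul_eq_mul_left n.succ_pos ?_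
    calc (n + 1) * ∑ ij ∈ antidiagonal (n + 1), centralBinom ij.1 * centralBinom ij.2
        = 2 * ∑ ij ∈ antidiagonal n,
            (ij.1 + 1) * centralBinom (ij.1 + 1) * centralBinom ij.2 := by
          rw [← two_mul_sum_antidiagonal_fst_mul_centralBinom_mul,
            Finset.Nat.sum_antidiagonal_succ]
          simp only [zero_mul, zero_add, mul_assoc]
      _ = 4 * (2 * ∑ ij ∈ antidiagonal n, ij.1 * (centralBinom ij.1 * centralBinom ij.2) +
            ∑ ij ∈ antidiagonal n, centralBinom ij.1 * centralBinom ij.2) := by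
          simp only [succ_mul_centralBinom_succ, mul_sum, ← sum_add_distrib]
          refine sum_congr rfl fun ij _ => by ring
      _ = (n + 1) * 4 ^ (n + 1) := by
          rw [two_mul_sum_antidiagonal_fst_mul_centralBinom_mul, ih]; ring

theorem eight_mul_sum_antidiagonal_mul_centralBinom_mul (n : ℕ) :
    8 * ∑ ij ∈ antidiagonal n, (ij.1 * ij.2 * (centralBinom ij.1 * centralBinom ij.2) : ℤ) =
      n * (n - 1) * 4 ^ n := by
  induction n using Nat.twoStepInduction with
  | zero => simp
  | one => simp [Finset.Nat.antidiagonal_succ]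
  | more n ih _ =>
    have hconv : ∑ ij ∈ antidiagonal n, (centralBinom ij.1 * centralBinom ij.2 : ℤ) = 4 ^ n :=
      mod_cast sum_antidiagonal_centralBinom_mul_centralBinom n
    have hrec (i : ℕ) :
        ((i + 1 : ℕ) : ℤ) * centralBinom (i + 1) = 2 * (2 * i + 1) * centralBinom i :=
      mod_cast succ_mul_centralBinom_succ i
    rw [Finset.Nat.sum_antidiagonal_succ, Finset.Nat.sum_antidiagonal_succ']
    calc 8 * (((0 : ℕ) : ℤ) * _ * _ + (_ + ∑ ij ∈ antidiagonal n, _))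
        = 8 * ∑ ij ∈ antidiagonal n, (((ij.1 + 1 : ℕ) : ℤ) * centralBinom (ij.1 + 1)) *
            (((ij.2 + 1 : ℕ) : ℤ) * centralBinom (ij.2 + 1)) := by
          simp only [Nat.cast_zero, zero_mul, mul_zero, zero_add]
          congr 1; refine sum_congr rfl fun ij _ => by ring
      _ = 16 * (8 * ∑ ij ∈ antidiagonal n,
              (ij.1 * ij.2 * (centralBinom ij.1 * centralBinom ij.2) : ℤ)) +
            32 * (2 * n + 1) *
              ∑ ij ∈ antidiagonal n, (centralBinom ij.1 * centralBinom ij.2 : ℤ) := by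
          simp only [hrec, mul_sum, ← sum_add_distrib]
          refine sum_congr rfl fun ij hij => ?_
          rw [← (mem_antidiagonal.mp hij)]
          push_cast; ring
      _ = ((n + 2 : ℕ) : ℤ) * ((n + 2 : ℕ) - 1) * 4 ^ (n + 2) := by
          rw [ih, hconv]; push_cast; ring

end Nat

theorem two_mul_sum_range_choose_mul_choose_mul_six_mul_add_one (k : ℕ) :
    2 * ∑ j ∈ range (k + 1), ((2 * j).choose j : ℤ) * (2 * (k - j)).choose (k - j) *
        (6 * j + 1) * (6 * (k - j : ℕ) + 1) = 4 ^ k * (9 * k ^ 2 + 3 * k + 2) := by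
  rw [← Finset.Nat.sum_antidiagonal_eq_sum_range_succ (fun i j => ((2 * i).choose i : ℤ) *
    (2 * j).choose j * (6 * i + 1) * (6 * j + 1))]
  have hconv : ∑ ij ∈ antidiagonal k, (centralBinom ij.1 * centralBinom ij.2 : ℤ) = 4 ^ k :=
    mod_cast sum_antidiagonal_centralBinom_mul_centralBinom k
  calc 2 * ∑ ij ∈ antidiagonal k, ((2 * ij.1).choose ij.1 : ℤ) * (2 * ij.2).choose ij.2 *
        (6 * ij.1 + 1) * (6 * ij.2 + 1)
      = 9 * (8 * ∑ ij ∈ antidiagonal k,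
            (ij.1 * ij.2 * (centralBinom ij.1 * centralBinom ij.2) : ℤ)) +
          2 * (6 * k + 1) *
            ∑ ij ∈ antidiagonal k, (centralBinom ij.1 * centralBinom ij.2 : ℤ) := by
        simp only [mul_sum, ← sum_add_distrib]
        refine sum_congr rfl fun ij hij => ?_
        rw [← mem_antidiagonal.mp hij, centralBinom_eq_two_mul_choose,
          centralBinom_eq_two_mul_choose]
        push_cast; ring
    _ = 4 ^ k * (9 * k ^ 2 + 3 * k + 2) := by
        rw [eight_mul_sum_antidiagonal_mul_centralBinom_mul, hconv]; ring

theorem two_mul_sum_range_neg_one_pow_mul_two_pow_mul (f : ℕ → ℤ)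
    (hf : ∀ k, 2 * f k = 4 ^ k * (9 * k ^ 2 + 3 * k + 2)) (n : ℕ) :
    2 * ∑ k ∈ range (n + 1), (-1) ^ k * 2 ^ (3 * (n - k)) * f k =
      (-1) ^ n * 4 ^ n * (n + 1) * (3 * n + 2) := by
  induction n with
  | zero => simp [hf 0]
  | succ n ih =>
    have hshift : ∀ k ∈ range (n + 1),
        (-1 : ℤ) ^ k * 2 ^ (3 * (n + 1 - k)) * f k =
          8 * ((-1) ^ k * 2 ^ (3 * (n - k)) * f k) := by
      intro k hk
      rw [Nat.sub_add_comm (mem_range_succ_iff.mp hk), mul_add_one, pow_add]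
      ring
    rw [sum_range_succ, sum_congr rfl hshift, ← mul_sum, mul_add, mul_left_comm 2 8, ih,
      Nat.sub_self]
    have hlast := hf (n + 1)
    push_cast at hlast ⊢
    linear_combination (-1) ^ (n + 1) * hlast

theorem stmt_11_general (p : ℕ) (hodd : Odd p) :
    (p : ℤ) ∣ ∑ k ∈ Finset.range p, (-1 : ℤ) ^ k * 2 ^ (3 * (p - 1 - k)) *
      ∑ j ∈ Finset.range (k + 1),
        ((2 * j).choose j : ℤ) * (2 * (k - j)).choose (k - j) * (6 * j + 1) * (6 * (k - j : ℕ) + 1) := by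
  obtain ⟨n, rfl⟩ : ∃ n, p = n + 1 := ⟨p - 1, (Nat.sub_add_cancel hodd.pos).symm⟩
  have hcop : IsCoprime ((n + 1 : ℕ) : ℤ) 2 := Nat.isCoprime_iff_coprime.mpr hodd.coprime_two_right
  refine hcop.dvd_of_dvd_mul_left ⟨(-1) ^ n * 4 ^ n * (3 * n + 2), ?_⟩
  rw [Nat.add_sub_cancel]
  push_cast
  linear_combination two_mul_sum_range_neg_one_pow_mul_two_pow_mul _
    two_mul_sum_range_choose_mul_choose_mul_six_mul_add_one n

theorem stmt_11 (p : ℕ) (hp : p.Prime) (hodd : Odd p) :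
    (p : ℤ) ∣ ∑ k ∈ Finset.range p, (-1 : ℤ) ^ k * 2 ^ (3 * (p - 1 - k)) *
      ∑ j ∈ Finset.range (k + 1),
        ((2 * j).choose j : ℤ) * (2 * (k - j)).choose (k - j) * (6 * j + 1) * (6 * (k - j : ℕ) + 1) :=
  stmt_11_general p hodd
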